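/- arXiv:1501.03579 — 3 statements merged into one kernel-verified Lean document; each statement's English description precedes it below -/
import Mathlib

section
/- Fix 0 < η < η' with η' sufficiently small, set λ = 1/e + η and ℓ = ⌊1/η'⌋, and let N_{η'} be the number of (λ,1)-light paths of length ℓ in SMF_n. Then E[N_{η'}²] = (1 + o(1))·(E[N_{η'}])² as n → ∞, i.e., E[N_{η'}²]/(E[N_{η'}])² → 1. -/
/-!
Write `A_p` for the event that the injective path `p` has weight at most `t = λℓ - √ℓ`; `ℓ` and
`t` stay fixed while `n → ∞`. Each edge weight is at most `s` with probability `≍ s/n`, so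
`P(A_p) ≍ (t/n)^ℓ`, and there are `≍ n^(ℓ+1)` paths: `E N ≍ n`. Events of edge-disjoint paths
are independent, so `E[N²] - (E N)²` only involves pairs of paths sharing some `k ≥ 1` edges.
Such paths share at least `k + 1` vertices, so there are `O(n^(2ℓ+1-k))` such pairs, each
contributing at most `(t/n)^(2ℓ-k)`. Hence `E[N²] - (E N)² = O(n)` and
`E[N²]/(E N)² = 1 + O(1/n)`.
-/

open MeasureTheory ProbabilityTheory Real Filter

noncomputable section

def pathWeight {n : ℕ} (W : Sym2 (Fin n) → ℝ) {m : ℕ} (p : Fin (m + 1) → Fin n) : ℝ :=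
  ∑ i : Fin m, W s(p i.castSucc, p i.succ)

def lightPathCount (n ℓ : ℕ) (lam : ℝ) (W : Sym2 (Fin n) → ℝ) : ℕ :=
  Nat.card {p : Fin (ℓ + 1) → Fin n // Function.Injective p ∧
    pathWeight W p ≤ lam * ℓ - Real.sqrt ℓ}

open Finset Function Topology

namespace LightPaths

lemma one_sub_exp_neg_le (u : ℝ) : 1 - exp (-u) ≤ u := by
  linarith [add_one_le_exp (-u)]

lemma half_le_one_sub_exp_neg {u : ℝ} (h0 : 0 ≤ u) (h1 : u ≤ 1) : u / 2 ≤ 1 - exp (-u) := by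
  have hinv : exp (-u) * (1 + u) ≤ 1 := by
    calc exp (-u) * (1 + u) ≤ exp (-u) * exp u := by
          gcongr; linarith [add_one_le_exp u]
      _ = 1 := by rw [← exp_add, neg_add_cancel, exp_zero]
  nlinarith [exp_pos (-u), mul_nonneg h0 (sub_nonneg.2 h1)]

lemma tendsto_div_sq_of_abs_sub_sq_le {u v : ℕ → ℝ} {a b : ℝ} (ha : 0 < a)
    (h : ∀ᶠ n in atTop, n * a ≤ v n ∧ |u n - v n ^ 2| ≤ n * b) :
    Tendsto (fun n => u n / v n ^ 2) atTop (𝓝 1) := by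
  rw [tendsto_iff_dist_tendsto_zero]
  refine squeeze_zero' (.of_forall fun n => dist_nonneg) ?_
    (tendsto_const_div_atTop_nhds_zero_nat (b / a ^ 2))
  filter_upwards [h, eventually_gt_atTop 0] with n ⟨hv, hd⟩ hn
  have hn : (0 : ℝ) < n := by exact_mod_cast hn
  have hv0 : 0 < v n := lt_of_lt_of_le (by positivity) hv
  rw [Real.dist_eq, div_sub_one (by positivity), abs_div, abs_of_pos (a := v n ^ 2) (by positivity)]
  calc |u n - v n ^ 2| / v n ^ 2 ≤ n * b / (n * a) ^ 2 :=
        div_le_div₀ ((abs_nonneg _).trans hd) hd (by positivity) (by gcongr)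
    _ = b / a ^ 2 / n := by field_simp

section Exponential

variable {r : ℝ}

lemma measureReal_expMeasure_Iic (hr : 0 < r) {s : ℝ} (hs : 0 ≤ s) :
    (expMeasure r).real (Set.Iic s) = 1 - exp (-(r * s)) := by
  have := isProbabilityMeasure_expMeasure hr
  rw [← cdf_eq_real, cdf_expMeasure_eq hr, if_pos hs]

lemma measureReal_expMeasure_Iic_le (hr : 0 < r) {s : ℝ} (hs : 0 ≤ s) :
    (expMeasure r).real (Set.Iic s) ≤ r * s := by
  rw [measureReal_expMeasure_Iic hr hs]
  exact one_sub_exp_neg_le _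

lemma le_measureReal_expMeasure_Iic (hr : 0 < r) {s : ℝ} (hs : 0 ≤ s) (hrs : r * s ≤ 1) :
    r * s / 2 ≤ (expMeasure r).real (Set.Iic s) := by
  rw [measureReal_expMeasure_Iic hr hs]
  exact half_le_one_sub_exp_neg (mul_nonneg hr.le hs) hrs

lemma ae_nonneg_expMeasure (hr : 0 < r) : ∀ᵐ y ∂expMeasure r, 0 ≤ y := by
  have := isProbabilityMeasure_expMeasure hr
  rw [ae_iff]
  refine measure_mono_null (fun y (hy : ¬0 ≤ y) => Set.mem_Iic.2 (not_le.1 hy).le) ?_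
  rw [← ofReal_cdf, cdf_expMeasure_eq hr, if_pos le_rfl, mul_zero, neg_zero, exp_zero, sub_self,
    ENNReal.ofReal_zero]

end Exponential

lemma hasLaw_of_map_eq {Ω 𝓧 : Type*} [MeasurableSpace Ω] [MeasurableSpace 𝓧] {X : Ω → 𝓧}
    {μ : Measure 𝓧} [NeZero μ] {P : Measure Ω} (h : P.map X = μ) : HasLaw X μ P :=
  ⟨aemeasurable_of_map_neZero (h ▸ inferInstance), h⟩

section IidCoordinates

variable {α : Type*} [Fintype α] {μ : Measure ℝ} [IsProbabilityMeasure μ]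

lemma measure_pi_forall_le (S : Finset α) (s : ℝ) :
    Measure.pi (fun _ : α => μ) {x | ∀ i ∈ S, x i ≤ s} = μ (Set.Iic s) ^ #S :=
  (Measure.pi_pi_finset (fun _ => μ) (fun _ => Set.Iic s) S).trans (prod_const _)

lemma pow_le_measure_pi_sum_le (S : Finset α) (s : ℝ) :
    μ (Set.Iic s) ^ #S ≤ Measure.pi (fun _ : α => μ) {x | ∑ i ∈ S, x i ≤ #S * s} := by
  rw [← measure_pi_forall_le]
  refine measure_mono fun x hx => ?_
  simpa using sum_le_sum hx

lemma measure_pi_sum_le_inter_le [DecidableEq α] (hμ : ∀ᵐ y ∂μ, 0 ≤ y) (S T : Finset α) (t : ℝ) :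
    Measure.pi (fun _ : α => μ) ({x | ∑ i ∈ S, x i ≤ t} ∩ {x | ∑ i ∈ T, x i ≤ t}) ≤
      μ (Set.Iic t) ^ #(S ∪ T) := by
  rw [← measure_pi_forall_le]
  refine measure_mono_ae ?_
  have hpos : ∀ᵐ x ∂Measure.pi (fun _ : α => μ), ∀ i, 0 ≤ x i :=
    eventually_all.2 fun i => Measure.tendsto_eval_ae_ae.eventually hμ
  filter_upwards [hpos] with x hx ⟨hS, hT⟩ i hi
  rcases mem_union.1 hi with hi | hi
  · exact (single_le_sum (fun j _ => hx j) hi).trans hS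
  · exact (single_le_sum (fun j _ => hx j) hi).trans hT

lemma measure_pi_sum_le_inter_of_disjoint {S T : Finset α} (hST : Disjoint S T) (a b : ℝ) :
    Measure.pi (fun _ : α => μ) ({x | ∑ i ∈ S, x i ≤ a} ∩ {x | ∑ i ∈ T, x i ≤ b}) =
      Measure.pi (fun _ : α => μ) {x | ∑ i ∈ S, x i ≤ a} *
        Measure.pi (fun _ : α => μ) {x | ∑ i ∈ T, x i ≤ b} := by
  have hcoord : iIndepFun (fun (i : α) (x : α → ℝ) => x i) (Measure.pi fun _ => μ) :=
    iIndepFun_pi (X := fun _ => id) fun _ => aemeasurable_id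
  have hsum : IndepFun (fun x : α → ℝ => ∑ i ∈ S, x i) (fun x => ∑ i ∈ T, x i)
      (Measure.pi fun _ => μ) := by
    have := (hcoord.indepFun_finset S T hST fun i => measurable_pi_apply i).comp
      (φ := fun v : S → ℝ => ∑ i, v i) (ψ := fun v : T → ℝ => ∑ i, v i) (by fun_prop) (by fun_prop)
    simpa [Function.comp_def, sum_attach] using this
  exact hsum.measure_inter_preimage_eq_mul _ _ measurableSet_Iic measurableSet_Iic

end IidCoordinates

section CountMoments

variable {Ω ι : Type*} [MeasurableSpace Ω] {μ : Measure Ω} [IsFiniteMeasure μ] {A : ι → Set Ω}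

lemma integral_sum_indicator_one (s : Finset ι) (hA : ∀ i, MeasurableSet (A i)) :
    ∫ x, ∑ i ∈ s, (A i).indicator 1 x ∂μ = ∑ i ∈ s, μ.real (A i) := by
  rw [integral_finsetSum _ fun i _ => (integrable_const 1).indicator (hA i)]
  exact sum_congr rfl fun i _ => integral_indicator_one (hA i)

lemma integral_sq_sum_indicator_one (s : Finset ι) (hA : ∀ i, MeasurableSet (A i)) :
    ∫ x, (∑ i ∈ s, (A i).indicator 1 x) ^ 2 ∂μ = ∑ i ∈ s, ∑ j ∈ s, μ.real (A i ∩ A j) := by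
  have hsq : ∀ x, (∑ i ∈ s, (A i).indicator 1 x) ^ 2 =
      ∑ ij ∈ s ×ˢ s, (A ij.1 ∩ A ij.2).indicator (1 : Ω → ℝ) x := by
    intro x
    rw [sq, sum_mul_sum, ← sum_product']
    simp [Set.inter_indicator_one]
  simp_rw [hsq]
  rw [integral_sum_indicator_one (A := fun ij : ι × ι => A ij.1 ∩ A ij.2) _
    fun ij => (hA ij.1).inter (hA ij.2), sum_product]

end CountMoments

section Paths

variable {n l : ℕ}

def pathEdges (p : Fin (l + 1) → Fin n) : Finset (Sym2 (Fin n)) :=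
  univ.image fun i : Fin l => s(p i.castSucc, p i.succ)

lemma injective_pathEdge {p : Fin (l + 1) → Fin n} (hp : Injective p) :
    Injective fun i : Fin l => s(p i.castSucc, p i.succ) := by
  intro i j h
  rcases Sym2.eq_iff.1 h with ⟨h1, -⟩ | ⟨h1, h2⟩
  · exact Fin.castSucc_injective _ (hp h1)
  · have h1 := congrArg Fin.val (hp h1)
    have h2 := congrArg Fin.val (hp h2)
    simp only [Fin.val_castSucc, Fin.val_succ] at h1 h2
    omega

lemma card_pathEdges {p : Fin (l + 1) → Fin n} (hp : Injective p) : #(pathEdges p) = l := by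
  rw [pathEdges, card_image_of_injective _ (injective_pathEdge hp), card_univ, Fintype.card_fin]

lemma pathWeight_eq_sum_pathEdges {p : Fin (l + 1) → Fin n} (hp : Injective p)
    (x : Sym2 (Fin n) → ℝ) : pathWeight x p = ∑ e ∈ pathEdges p, x e := by
  rw [pathEdges, sum_image fun i _ j _ h => injective_pathEdge hp h]
  rfl

lemma mem_image_of_mem_pathEdges {p : Fin (l + 1) → Fin n} {a b : Fin n}
    (h : s(a, b) ∈ pathEdges p) : a ∈ univ.image p ∧ b ∈ univ.image p := by
  obtain ⟨i, -, hi⟩ := mem_image.1 h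
  rcases Sym2.eq_iff.1 hi with ⟨rfl, rfl⟩ | ⟨rfl, rfl⟩ <;> simp

/-- If `q` runs along `k ≥ 1` edges of `p`, the first of these edges and the endpoints of all of
them give `k + 1` distinct vertices of `q` lying on `p`. -/
lemma card_inter_pathEdges_lt {p q : Fin (l + 1) → Fin n} (hq : Injective q)
    (h : (pathEdges p ∩ pathEdges q).Nonempty) :
    #(pathEdges p ∩ pathEdges q) < #{j | q j ∈ univ.image p} := by
  set S : Finset (Fin l) := {i | s(q i.castSucc, q i.succ) ∈ pathEdges p}
  have hS : pathEdges p ∩ pathEdges q = S.image fun i => s(q i.castSucc, q i.succ) := by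
    ext e
    simp only [S, pathEdges, mem_inter, mem_image, mem_filter, mem_univ, true_and]
    constructor
    · rintro ⟨he, i, rfl⟩
      exact ⟨i, he, rfl⟩
    · rintro ⟨i, he, rfl⟩
      exact ⟨he, i, rfl⟩
  rw [hS] at h
  rw [hS, card_image_of_injective _ (injective_pathEdge hq)]
  have hSne : S.Nonempty := image_nonempty.1 h
  have hfirst : (S.min' hSne).castSucc ∉ S.image Fin.succ := by
    simp only [mem_image, not_exists, not_and]
    intro i hi hsucc
    have := congrArg Fin.val hsucc
    have := S.min'_le i hi
    simp only [Fin.val_succ, Fin.val_castSucc] at *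
    omega
  calc #S < #(insert (S.min' hSne).castSucc (S.image Fin.succ)) := by
        rw [card_insert_of_notMem hfirst, card_image_of_injective _ (Fin.succ_injective _)]
        omega
    _ ≤ #{j | q j ∈ univ.image p} := by
        refine card_le_card fun j hj => mem_filter.2 ⟨mem_univ j, ?_⟩
        rcases mem_insert.1 hj with rfl | hj
        · exact (mem_image_of_mem_pathEdges (mem_filter.1 (S.min'_mem hSne)).2).1
        · obtain ⟨i, hi, rfl⟩ := mem_image.1 hj
          exact (mem_image_of_mem_pathEdges (mem_filter.1 hi).2).2

lemma pow_card_union_pathEdges_le {p q : Fin (l + 1) → Fin n} (hp : Injective p)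
    (hq : Injective q) (h : ¬Disjoint (pathEdges p) (pathEdges q)) {c : ℝ} (hc0 : 0 ≤ c)
    (hc1 : c ≤ 1) :
    c ^ #(pathEdges p ∪ pathEdges q) ≤ c ^ l * ∏ j, if q j ∈ univ.image p then 1 else c := by
  have hlt := card_inter_pathEdges_lt hq (not_disjoint_iff_nonempty_inter.1 h)
  have hunion := card_union_add_card_inter (pathEdges p) (pathEdges q)
  have hsplit := card_filter_add_card_filter_not (s := univ)
    (fun j : Fin (l + 1) => q j ∈ univ.image p)
  rw [card_pathEdges hp, card_pathEdges hq] at hunion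
  rw [card_univ, Fintype.card_fin] at hsplit
  rw [prod_ite, prod_const_one, prod_const, one_mul, ← pow_add]
  exact pow_le_pow_of_le_one hc0 hc1 (by omega)

def injectivePaths (n l : ℕ) : Finset (Fin (l + 1) → Fin n) := {p | Injective p}

lemma card_injectivePaths : #(injectivePaths n l) = n.descFactorial (l + 1) := by
  rw [injectivePaths, ← Fintype.card_subtype,
    Fintype.card_congr (Equiv.subtypeInjectiveEquivEmbedding _ _), Fintype.card_embedding_eq]
  simp

lemma sum_pow_card_union_pathEdges_le {p : Fin (l + 1) → Fin n} (hp : Injective p) {c : ℝ}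
    (hc0 : 0 ≤ c) (hc1 : c ≤ 1) :
    ∑ q ∈ injectivePaths n l with ¬Disjoint (pathEdges p) (pathEdges q),
        c ^ #(pathEdges p ∪ pathEdges q) ≤ c ^ l * (l + 1 + n * c) ^ (l + 1) := by
  set w : Fin n → ℝ := fun v => if v ∈ univ.image p then 1 else c
  have hw0 : ∀ v, 0 ≤ w v := fun v => by simp only [w]; split_ifs <;> linarith
  have hw : ∑ v, w v ≤ l + 1 + n * c := by
    calc ∑ v, w v ≤ ∑ v, ((if v ∈ univ.image p then 1 else 0) + c) :=
          sum_le_sum fun v _ => by simp only [w]; split_ifs <;> linarith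
      _ = #(univ.image p) + n * c := by
          rw [sum_add_distrib, sum_boole, filter_mem_eq_inter, univ_inter, sum_const, card_univ,
            Fintype.card_fin, nsmul_eq_mul]
      _ ≤ l + 1 + n * c := by
          gcongr
          exact_mod_cast card_image_le.trans (by simp)
  calc ∑ q ∈ injectivePaths n l with ¬Disjoint (pathEdges p) (pathEdges q),
        c ^ #(pathEdges p ∪ pathEdges q)
      ≤ ∑ q ∈ injectivePaths n l with ¬Disjoint (pathEdges p) (pathEdges q),
        c ^ l * ∏ j, w (q j) := sum_le_sum fun q hq => by
          obtain ⟨hq, hpq⟩ := mem_filter.1 hq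
          exact pow_card_union_pathEdges_le hp (mem_filter.1 hq).2 hpq hc0 hc1
    _ ≤ ∑ q : Fin (l + 1) → Fin n, c ^ l * ∏ j, w (q j) :=
        sum_le_sum_of_subset_of_nonneg (subset_univ _) fun q _ _ =>
          mul_nonneg (pow_nonneg hc0 _) (prod_nonneg fun j _ => hw0 _)
    -- the bound of `pow_card_union_pathEdges_le` factorizes over the vertices of `q`
    _ = c ^ l * (∑ v, w v) ^ (l + 1) := by rw [← mul_sum, Fintype.sum_pow]
    _ ≤ c ^ l * (l + 1 + n * c) ^ (l + 1) := by gcongr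

end Paths

section MeanField

variable {n l : ℕ}

abbrev smfLaw (n : ℕ) : Measure (Sym2 (Fin n) → ℝ) := Measure.pi fun _ => expMeasure (1 / n)

def lightSet (t : ℝ) (p : Fin (l + 1) → Fin n) : Set (Sym2 (Fin n) → ℝ) :=
  {x | pathWeight x p ≤ t}

lemma measurableSet_lightSet (t : ℝ) (p : Fin (l + 1) → Fin n) : MeasurableSet (lightSet t p) :=
  measurableSet_le (Finset.measurable_sum _ fun _ _ => measurable_pi_apply _) measurable_const

lemma lightSet_eq {p : Fin (l + 1) → Fin n} (hp : Injective p) (t : ℝ) :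
    lightSet t p = {x | ∑ e ∈ pathEdges p, x e ≤ t} := by
  ext x
  simp [lightSet, pathWeight_eq_sum_pathEdges hp]

lemma lightPathCount_eq_sum_indicator (lam : ℝ) (x : Sym2 (Fin n) → ℝ) :
    (lightPathCount n l lam x : ℝ) =
      ∑ p ∈ injectivePaths n l, (lightSet (lam * l - √l) p).indicator 1 x := by
  classical
  simp only [Set.indicator_apply, Pi.one_apply, lightSet, Set.mem_ofPred_eq]
  rw [sum_boole, injectivePaths, filter_filter, lightPathCount, Nat.card_eq_fintype_card,
    Fintype.card_subtype]

lemma measurable_lightPathCount (lam : ℝ) :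
    Measurable fun x : Sym2 (Fin n) → ℝ => (lightPathCount n l lam x : ℝ) := by
  simp_rw [lightPathCount_eq_sum_indicator]
  exact Finset.measurable_sum _ fun p _ => measurable_one.indicator (measurableSet_lightSet _ p)

lemma measureReal_lightSet_inter_le (hn : 0 < n) {t : ℝ} (ht : 0 ≤ t)
    {p q : Fin (l + 1) → Fin n} (hp : Injective p) (hq : Injective q) :
    (smfLaw n).real (lightSet t p ∩ lightSet t q) ≤ (t / n) ^ #(pathEdges p ∪ pathEdges q) := by
  have hr : (0 : ℝ) < 1 / n := by positivity
  have := isProbabilityMeasure_expMeasure hr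
  rw [lightSet_eq hp, lightSet_eq hq, measureReal_def]
  calc _ ≤ (expMeasure (1 / n) (Set.Iic t) ^ #(pathEdges p ∪ pathEdges q)).toReal :=
        ENNReal.toReal_mono (by finiteness)
          (measure_pi_sum_le_inter_le (ae_nonneg_expMeasure hr) _ _ t)
    _ = (expMeasure (1 / n)).real (Set.Iic t) ^ #(pathEdges p ∪ pathEdges q) := by
        rw [ENNReal.toReal_pow, measureReal_def]
    _ ≤ (t / n) ^ #(pathEdges p ∪ pathEdges q) := by
        gcongr
        simpa [div_eq_inv_mul] using measureReal_expMeasure_Iic_le hr ht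

lemma measureReal_lightSet_le (hn : 0 < n) {t : ℝ} (ht : 0 ≤ t) {p : Fin (l + 1) → Fin n}
    (hp : Injective p) : (smfLaw n).real (lightSet t p) ≤ (t / n) ^ l := by
  simpa [card_pathEdges hp] using measureReal_lightSet_inter_le hn ht hp hp

lemma le_measureReal_lightSet (hn : 0 < n) (hl : 0 < l) {t : ℝ} (ht : 0 ≤ t) (htn : t ≤ l * n)
    {p : Fin (l + 1) → Fin n} (hp : Injective p) :
    (t / (2 * l * n)) ^ l ≤ (smfLaw n).real (lightSet t p) := by
  have hr : (0 : ℝ) < 1 / n := by positivity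
  have := isProbabilityMeasure_expMeasure hr
  have hbox := pow_le_measure_pi_sum_le (μ := expMeasure (1 / n)) (pathEdges p) (t / l)
  rw [card_pathEdges hp, mul_div_cancel₀ _ (by positivity), ← lightSet_eq hp] at hbox
  have hrs : 1 / n * (t / l) ≤ 1 := by
    rw [show 1 / n * (t / l) = t / (l * n) by field_simp]
    exact div_le_one_of_le₀ htn (by positivity)
  calc (t / (2 * l * n)) ^ l = (1 / n * (t / l) / 2) ^ l := by field_simp
    _ ≤ (expMeasure (1 / n)).real (Set.Iic (t / l)) ^ l := by
        gcongr
        exact le_measureReal_expMeasure_Iic hr (by positivity) hrs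
    _ = (expMeasure (1 / n) (Set.Iic (t / l)) ^ l).toReal := by
        rw [ENNReal.toReal_pow, measureReal_def]
    _ ≤ (smfLaw n).real (lightSet t p) := ENNReal.toReal_mono (measure_ne_top _ _) hbox

lemma measureReal_lightSet_inter_of_disjoint (hn : 0 < n) (t : ℝ) {p q : Fin (l + 1) → Fin n}
    (hp : Injective p) (hq : Injective q) (hpq : Disjoint (pathEdges p) (pathEdges q)) :
    (smfLaw n).real (lightSet t p ∩ lightSet t q) =
      (smfLaw n).real (lightSet t p) * (smfLaw n).real (lightSet t q) := by
  have := isProbabilityMeasure_expMeasure (r := 1 / n) (by positivity)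
  simp only [lightSet_eq hp, lightSet_eq hq, measureReal_def,
    measure_pi_sum_le_inter_of_disjoint hpq, ENNReal.toReal_mul]

lemma abs_measureReal_lightSet_inter_sub_mul_le (hn : 0 < n) {t : ℝ} (ht : 0 ≤ t)
    (htn : t ≤ n) {p q : Fin (l + 1) → Fin n} (hp : Injective p) (hq : Injective q) :
    |(smfLaw n).real (lightSet t p ∩ lightSet t q) -
        (smfLaw n).real (lightSet t p) * (smfLaw n).real (lightSet t q)| ≤
      (t / n) ^ #(pathEdges p ∪ pathEdges q) := by
  have hc0 : 0 ≤ t / n := by positivity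
  have hc1 : t / n ≤ 1 := div_le_one_of_le₀ htn (by positivity)
  have hprod : (smfLaw n).real (lightSet t p) * (smfLaw n).real (lightSet t q) ≤
      (t / n) ^ #(pathEdges p ∪ pathEdges q) :=
    calc _ ≤ (t / n) ^ l * (t / n) ^ l :=
          mul_le_mul (measureReal_lightSet_le hn ht hp) (measureReal_lightSet_le hn ht hq)
            measureReal_nonneg (by positivity)
      _ = (t / n) ^ (#(pathEdges p) + #(pathEdges q)) := by
          rw [card_pathEdges hp, card_pathEdges hq, pow_add]
      _ ≤ _ := pow_le_pow_of_le_one hc0 hc1 (card_union_le _ _)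
  simpa using abs_sub_le_of_le_of_le measureReal_nonneg (measureReal_lightSet_inter_le hn ht hp hq)
    (mul_nonneg measureReal_nonneg measureReal_nonneg) hprod

lemma half_pow_le_card_injectivePaths (h : 2 * l ≤ n) :
    ((n : ℝ) / 2) ^ (l + 1) ≤ #(injectivePaths n l) := by
  have hdesc : (n - l) ^ (l + 1) ≤ #(injectivePaths n l) := by
    rw [card_injectivePaths]
    simpa using Nat.pow_sub_le_descFactorial n (l + 1)
  calc ((n : ℝ) / 2) ^ (l + 1) ≤ ((n - l : ℕ) : ℝ) ^ (l + 1) := by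
        gcongr
        rw [Nat.cast_sub (by omega)]
        have : (2 * l : ℝ) ≤ n := by exact_mod_cast h
        linarith
    _ ≤ #(injectivePaths n l) := by exact_mod_cast hdesc

lemma le_sum_measureReal_lightSet (hl : 0 < l) (h : 2 * l ≤ n) {t : ℝ} (ht : 0 ≤ t)
    (htn : t ≤ n) :
    n * ((t / (2 * l)) ^ l / 2 ^ (l + 1)) ≤
      ∑ p ∈ injectivePaths n l, (smfLaw n).real (lightSet t p) := by
  have hn : 0 < n := by omega
  have htln : t ≤ l * n := htn.trans (le_mul_of_one_le_left (by positivity) (by exact_mod_cast hl))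
  calc n * ((t / (2 * l)) ^ l / 2 ^ (l + 1)) = ((n : ℝ) / 2) ^ (l + 1) * (t / (2 * l * n)) ^ l := by
        simp only [div_pow, mul_pow, pow_succ]
        field_simp
    _ ≤ #(injectivePaths n l) * (t / (2 * l * n)) ^ l := by
        gcongr
        exact half_pow_le_card_injectivePaths h
    _ = ∑ p ∈ injectivePaths n l, (t / (2 * l * n)) ^ l := by rw [sum_const, nsmul_eq_mul]
    _ ≤ _ := sum_le_sum fun p hp => le_measureReal_lightSet hn hl ht htln (mem_filter.1 hp).2

/-- Only pairs of paths sharing an edge are correlated. -/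
lemma abs_sum_measureReal_lightSet_inter_sub_mul_le (hn : 0 < n) {t : ℝ} (ht : 0 ≤ t)
    (htn : t ≤ n) :
    |∑ p ∈ injectivePaths n l, ∑ q ∈ injectivePaths n l,
        ((smfLaw n).real (lightSet t p ∩ lightSet t q) -
          (smfLaw n).real (lightSet t p) * (smfLaw n).real (lightSet t q))| ≤
      n * (t ^ l * (l + 1 + t) ^ (l + 1)) := by
  have hc0 : 0 ≤ t / n := by positivity
  have hc1 : t / n ≤ 1 := div_le_one_of_le₀ htn (by positivity)
  have hrow : ∀ p ∈ injectivePaths n l,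
      |∑ q ∈ injectivePaths n l, ((smfLaw n).real (lightSet t p ∩ lightSet t q) -
          (smfLaw n).real (lightSet t p) * (smfLaw n).real (lightSet t q))| ≤
        (t / n) ^ l * (l + 1 + n * (t / n)) ^ (l + 1) := by
    intro p hp
    replace hp := (mem_filter.1 hp).2
    rw [← sum_filter_of_ne (p := fun q => ¬Disjoint (pathEdges p) (pathEdges q))]
    · refine (abs_sum_le_sum_abs _ _).trans ((sum_le_sum fun q hq => ?_).trans
        (sum_pow_card_union_pathEdges_le hp hc0 hc1))
      exact abs_measureReal_lightSet_inter_sub_mul_le hn ht htn hp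
        (mem_filter.1 (mem_filter.1 hq).1).2
    · intro q hq hne hdisj
      exact hne (by rw [measureReal_lightSet_inter_of_disjoint hn t hp (mem_filter.1 hq).2 hdisj,
        sub_self])
  calc _ ≤ ∑ p ∈ injectivePaths n l, |∑ q ∈ injectivePaths n l,
          ((smfLaw n).real (lightSet t p ∩ lightSet t q) -
            (smfLaw n).real (lightSet t p) * (smfLaw n).real (lightSet t q))| :=
        abs_sum_le_sum_abs _ _
    _ ≤ #(injectivePaths n l) * ((t / n) ^ l * (l + 1 + n * (t / n)) ^ (l + 1)) := by
        rw [← nsmul_eq_mul, ← sum_const]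
        exact sum_le_sum hrow
    _ ≤ (n : ℝ) ^ (l + 1) * ((t / n) ^ l * (l + 1 + n * (t / n)) ^ (l + 1)) := by
        gcongr
        exact_mod_cast card_injectivePaths (n := n) (l := l) ▸ Nat.descFactorial_le_pow n (l + 1)
    _ = n * (t ^ l * (l + 1 + t) ^ (l + 1)) := by
        rw [mul_div_cancel₀ _ (by positivity), div_pow, pow_succ]
        field_simp

theorem tendsto_integral_sq_div_sq_integral_lightPathCount (hl : 0 < l) {lam : ℝ}
    (ht : 0 < lam * l - √l) :
    Tendsto (fun n => (∫ x, (lightPathCount n l lam x : ℝ) ^ 2 ∂smfLaw n) /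
      (∫ x, (lightPathCount n l lam x : ℝ) ∂smfLaw n) ^ 2) atTop (𝓝 1) := by
  set t := lam * l - √l
  refine tendsto_div_sq_of_abs_sub_sq_le (a := (t / (2 * l)) ^ l / 2 ^ (l + 1))
    (b := t ^ l * (l + 1 + t) ^ (l + 1)) (by positivity) ?_
  filter_upwards [eventually_ge_atTop (2 * l), eventually_ge_atTop ⌈t⌉₊] with n hln htn
  have hn : 0 < n := by omega
  replace htn : t ≤ n := (Nat.le_ceil t).trans (by exact_mod_cast htn)
  have := isProbabilityMeasure_expMeasure (r := 1 / n) (by positivity)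
  simp_rw [lightPathCount_eq_sum_indicator]
  rw [integral_sum_indicator_one _ (measurableSet_lightSet t),
    integral_sq_sum_indicator_one _ (measurableSet_lightSet t)]
  refine ⟨le_sum_measureReal_lightSet hl hln ht.le htn, ?_⟩
  simpa only [sq, sum_mul_sum, ← sum_sub_distrib] using
    abs_sum_measureReal_lightSet_inter_sub_mul_le hn ht.le htn

end MeanField

lemma lightThreshold_pos {η : ℝ} (hη : 0 < η) {l : ℕ} (hl : 8 ≤ l) :
    0 < (1 / exp 1 + η) * l - √l := by
  have hl' : (8 : ℝ) ≤ l := by exact_mod_cast hl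
  have he : exp 1 ≤ √l :=
    calc exp 1 ≤ 2.72 := by linarith [exp_one_lt_d9]
      _ ≤ √8 := le_sqrt_of_sq_le (by norm_num)
      _ ≤ √l := sqrt_le_sqrt hl'
  have hsqrt : √l ≤ l / exp 1 := by
    rw [le_div_iff₀ (exp_pos 1)]
    nlinarith [sq_sqrt (show (0 : ℝ) ≤ l by positivity), sqrt_nonneg (l : ℝ)]
  have : (1 / exp 1 + η) * l = l / exp 1 + η * l := by ring
  nlinarith

end LightPaths

open LightPaths

/-- **Second moment of the number of short `(λ,1)`-light paths.**
There is an absolute constant `η₀ > 0` such that for all `0 < η < η' < η₀`, with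
`λ = 1/e + η`, `ℓ = ⌊1/η'⌋` and `N_{η'}` the number of `(λ,1)`-light paths of length `ℓ`
in the stochastic mean-field model, one has `E[N_{η'}²] = (1 + o(1))·(E[N_{η'}])²` as
`n → ∞`, i.e. `E[N_{η'}²]/(E[N_{η'}])² → 1`. -/
theorem second_moment_light_paths :
    ∃ η₀ : ℝ, 0 < η₀ ∧
      ∀ η η' : ℝ, 0 < η → η < η' → η' < η₀ →
      ∀ (Ω : ℕ → Type) (mΩ : ∀ n, MeasurableSpace (Ω n)) (P : ∀ n, Measure (Ω n)),
        (∀ n, IsProbabilityMeasure (P n)) →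
      ∀ W : ∀ n, Sym2 (Fin n) → Ω n → ℝ,
        (∀ n, iIndepFun (W n) (P n)) →
        (∀ n e, Measure.map (W n e) (P n) = expMeasure (1 / n)) →
      Tendsto
        (fun n =>
          (∫ ω, ((lightPathCount n ⌊1 / η'⌋₊ (1 / Real.exp 1 + η)
              (fun e => W n e ω) : ℝ)) ^ 2 ∂(P n)) /
          (∫ ω, (lightPathCount n ⌊1 / η'⌋₊ (1 / Real.exp 1 + η)
              (fun e => W n e ω) : ℝ) ∂(P n)) ^ 2)
        atTop (nhds 1) := by
  -- `η' < 1/8` gives `ℓ ≥ 8 > e²`, which makes the threshold `λℓ - √ℓ` positive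
  refine ⟨1 / 8, by norm_num, fun η η' hη hηη' hη'8 Ω _ P _ W hind hW => ?_⟩
  have hl : 8 ≤ ⌊1 / η'⌋₊ :=
    Nat.le_floor (by rw [le_div_iff₀ (hη.trans hηη')]; push_cast; linarith)
  refine (tendsto_integral_sq_div_sq_integral_lightPathCount (by omega)
    (lightThreshold_pos hη hl)).congr' ?_
  filter_upwards [eventually_gt_atTop 0] with n hn
  have := isProbabilityMeasure_expMeasure (r := 1 / n) (by positivity)
  have hlaw : HasLaw (fun ω e => W n e ω) (smfLaw n) (P n) :=
    (hind n).hasLaw_pi fun e => hasLaw_of_map_eq (hW n e)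
  have hmeas := measurable_lightPathCount (n := n) (l := ⌊1 / η'⌋₊) (1 / exp 1 + η)
  rw [← hlaw.integral_comp hmeas.aestronglyMeasurable,
    ← hlaw.integral_comp (hmeas.pow_const 2).aestronglyMeasurable]
  rfl
end
end

section
/- Let λ = 1/e + η with η > 0. For every n ≥ 1 and every integer k ≥ 1, the expected number of λ-light paths of length k in SMF_n is at most (n/√(2πk))·e^{e·k·η}; equivalently, Σ_{π ∈ Π_k} P(A(π) ≤ λ) ≤ (n/√(2πk))·e^{ekη}, where Π_k is the set of all paths of length k. -/
open MeasureTheory ProbabilityTheory Real Filter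

noncomputable section

open Set
open scoped ENNReal Nat

/-! The expected number of light paths is, by linearity, a sum over the at most `n ^ (k + 1)`
injective vertex sequences of the probability that `k` independent `Exp(1/n)` edge weights sum
to at most `t = λk`; the edges are distinct because the vertices are. The exponential density is
at most its rate on `[0, ∞)`, so this probability is at most `(t/n)^k / k!`, the rescaled volume
of a simplex. Stirling's bound `k! ≥ √(2πk) (k/e)^k` turns `n^(k+1) (t/n)^k / k!` into
`n (λe)^k / √(2πk)`, and `λe = 1 + eη ≤ e^(eη)`. -/

theorem exponentialPDF_le_indicator {r : ℝ} (hr : 0 ≤ r) (x : ℝ) :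
    exponentialPDF r x ≤ (Ici 0).indicator (fun _ => ENNReal.ofReal r) x := by
  rcases lt_or_ge x 0 with hx | hx
  · simp [exponentialPDF_of_neg hx]
  · rw [exponentialPDF_of_nonneg hx, indicator_of_mem (mem_Ici.2 hx)]
    gcongr
    exact mul_le_of_le_one_right hr (exp_le_one_iff.2 (by nlinarith))

theorem expMeasure_le_smul_restrict_Ici {r : ℝ} (hr : 0 ≤ r) :
    expMeasure r ≤ ENNReal.ofReal r • volume.restrict (Ici 0) := by
  rw [← withDensity_const, ← withDensity_indicator measurableSet_Ici]
  exact withDensity_mono (.of_forall (exponentialPDF_le_indicator hr))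

/-- The indicator keeps the bound at `0` for `t < 0`, where `(r t)^k / k!` may be positive;
the inductive step of `pi_expMeasure_setOf_sum_le` relies on this. -/
def erlangCDFBound (r : ℝ) (k : ℕ) : ℝ → ℝ≥0∞ :=
  (Ici 0).indicator fun t => ENNReal.ofReal ((r * t) ^ k / k !)

theorem integral_Icc_pow_sub_div_factorial (r : ℝ) (k : ℕ) {t : ℝ} (ht : 0 ≤ t) :
    r * ∫ a in Icc 0 t, (r * (t - a)) ^ k / k ! = (r * t) ^ (k + 1) / (k + 1)! := by
  rw [integral_Icc_eq_integral_Ioc, ← intervalIntegral.integral_of_le ht,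
    intervalIntegral.integral_comp_sub_left (fun x => (r * x) ^ k / k !) t]
  simp only [mul_pow, sub_self, sub_zero, intervalIntegral.integral_div,
    intervalIntegral.integral_const_mul, integral_pow, Nat.factorial_succ]
  push_cast
  field_simp
  ring

theorem setLIntegral_Ici_erlangCDFBound_sub {r : ℝ} (hr : 0 ≤ r) (k : ℕ) (t : ℝ) :
    ENNReal.ofReal r * ∫⁻ a in Ici 0, erlangCDFBound r k (t - a)
      = erlangCDFBound r (k + 1) t := by
  rcases lt_or_ge t 0 with ht | ht
  · have hzero : ∀ a ∈ Ici (0 : ℝ), erlangCDFBound r k (t - a) = 0 := fun a ha =>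
      indicator_of_notMem (by simp only [mem_Ici, not_le]; linarith [mem_Ici.1 ha]) _
    rw [setLIntegral_congr_fun measurableSet_Ici hzero, lintegral_zero, mul_zero,
      erlangCDFBound, indicator_of_notMem (by simpa using ht)]
  have hrestrict : ∫⁻ a in Ici 0, erlangCDFBound r k (t - a)
      = ∫⁻ a in Icc 0 t, ENNReal.ofReal ((r * (t - a)) ^ k / k !) := by
    rw [← lintegral_indicator measurableSet_Ici, ← lintegral_indicator measurableSet_Icc]
    congr 1 with a
    by_cases ha : 0 ≤ a <;> by_cases hat : a ≤ t <;>
      simp [erlangCDFBound, indicator, ha, hat]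
  have hnonneg : 0 ≤ᵐ[volume.restrict (Icc 0 t)] fun a => (r * (t - a)) ^ k / k ! := by
    filter_upwards [ae_restrict_mem measurableSet_Icc] with a ha
    have : 0 ≤ t - a := by linarith [ha.2]
    positivity
  have hint : IntegrableOn (fun a => (r * (t - a)) ^ k / k !) (Icc 0 t) :=
    (by fun_prop : Continuous fun a : ℝ => (r * (t - a)) ^ k / k !).integrableOn_Icc
  rw [hrestrict, ← ofReal_integral_eq_lintegral_ofReal hint hnonneg, ← ENNReal.ofReal_mul hr,
    integral_Icc_pow_sub_div_factorial r k ht, erlangCDFBound, indicator_of_mem (mem_Ici.2 ht)]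

theorem pi_setOf_sum_le_succ (μ : Measure ℝ) [SigmaFinite μ] (k : ℕ) (t : ℝ) :
    (Measure.pi fun _ : Fin (k + 1) => μ) {x | ∑ i, x i ≤ t}
      = ∫⁻ a, (Measure.pi fun _ : Fin k => μ) {x | ∑ i, x i ≤ t - a} ∂μ := by
  set T : Set (ℝ × (Fin k → ℝ)) := {y | y.1 + ∑ i, y.2 i ≤ t}
  have hT : MeasurableSet T := measurableSet_le (by fun_prop) measurable_const
  have hpre : MeasurableEquiv.piFinSuccAbove (fun _ => ℝ) 0 ⁻¹' T = {x | ∑ i, x i ≤ t} := by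
    ext x
    simp [T, Fin.sum_univ_succ, Fin.tail]
  rw [← hpre, (measurePreserving_piFinSuccAbove (fun _ => μ) 0).measure_preimage
    hT.nullMeasurableSet, Measure.prod_apply hT]
  congr 1 with a
  congr 1 with x
  simp only [T, mem_preimage, mem_ofPred_eq]
  constructor <;> intro h <;> linarith

theorem pi_expMeasure_setOf_sum_le {r : ℝ} (hr : 0 < r) (k : ℕ) (t : ℝ) :
    (Measure.pi fun _ : Fin k => expMeasure r) {x | ∑ i, x i ≤ t} ≤ erlangCDFBound r k t := by
  have := isProbabilityMeasure_expMeasure hr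
  induction k generalizing t with
  | zero =>
    by_cases ht : 0 ≤ t
    · simp [erlangCDFBound, ht]
    · simp [ht]
  | succ k ih =>
    calc _ = ∫⁻ a, (Measure.pi fun _ : Fin k => expMeasure r) {x | ∑ i, x i ≤ t - a}
            ∂expMeasure r := pi_setOf_sum_le_succ _ k t
      _ ≤ ∫⁻ a, erlangCDFBound r k (t - a) ∂expMeasure r := lintegral_mono fun a => ih (t - a)
      _ ≤ ∫⁻ a, erlangCDFBound r k (t - a) ∂(ENNReal.ofReal r • volume.restrict (Ici 0)) :=
          lintegral_mono' (expMeasure_le_smul_restrict_Ici hr.le) le_rfl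
      _ = erlangCDFBound r (k + 1) t := by
          rw [lintegral_smul_measure, smul_eq_mul, setLIntegral_Ici_erlangCDFBound_sub hr.le]

theorem aemeasurable_of_map_eq_expMeasure {Ω : Type*} [MeasurableSpace Ω] {P : Measure Ω}
    {X : Ω → ℝ} {r : ℝ} (hr : 0 < r) (hX : P.map X = expMeasure r) : AEMeasurable X P :=
  .of_map_ne_zero <| by rw [hX]; exact (isProbabilityMeasure_expMeasure hr).ne_zero

theorem measure_sum_le_erlangCDFBound {Ω : Type*} [MeasurableSpace Ω] {P : Measure Ω} {r : ℝ}
    (hr : 0 < r) {k : ℕ} {X : Fin k → Ω → ℝ} (hindep : iIndepFun X P)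
    (hX : ∀ i, P.map (X i) = expMeasure r) (t : ℝ) :
    P {ω | ∑ i, X i ω ≤ t} ≤ erlangCDFBound r k t := by
  have hmeas i : AEMeasurable (X i) P := aemeasurable_of_map_eq_expMeasure hr (hX i)
  have hsum : MeasurableSet {x : Fin k → ℝ | ∑ i, x i ≤ t} :=
    measurableSet_le (by fun_prop) measurable_const
  calc P {ω | ∑ i, X i ω ≤ t} = P.map (fun ω i => X i ω) {x | ∑ i, x i ≤ t} :=
        (Measure.map_apply_of_aemeasurable (aemeasurable_pi_lambda _ hmeas) hsum).symm
    _ = (Measure.pi fun _ : Fin k => expMeasure r) {x | ∑ i, x i ≤ t} := by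
        simp only [hindep.map_fun_eq_pi_map hmeas, hX]
    _ ≤ erlangCDFBound r k t := pi_expMeasure_setOf_sum_le hr k t

theorem integral_natCard_eq_sum_measureReal {Ω α : Type*} [MeasurableSpace Ω] [Fintype α]
    {P : Measure Ω} [IsFiniteMeasure P] {E : α → Set Ω} (hE : ∀ a, NullMeasurableSet (E a) P) :
    ∫ ω, (Nat.card {a // ω ∈ E a} : ℝ) ∂P = ∑ a, P.real (E a) := by
  classical
  have hcard ω : (Nat.card {a // ω ∈ E a} : ℝ) = ∑ a, (E a).indicator 1 ω := by
    rw [Nat.card_eq_fintype_card, Fintype.card_subtype, Finset.card_filter]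
    push_cast
    simp [indicator_apply]
  simp only [hcard]
  rw [integral_finsetSum _ fun a _ => (integrable_const 1).indicator₀ (hE a)]
  simp [integral_indicator₀ (hE _)]

theorem pathEdges_injective {n k : ℕ} {p : Fin (k + 1) → Fin n} (hp : Function.Injective p) :
    Function.Injective fun i : Fin k => s(p i.castSucc, p i.succ) := by
  intro i j h
  rcases Sym2.eq_iff.1 h with ⟨h₁, -⟩ | ⟨h₁, h₂⟩
  · exact Fin.castSucc_injective _ (hp h₁)
  · have h₁ := congrArg Fin.val (hp h₁)
    have h₂ := congrArg Fin.val (hp h₂)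
    simp only [Fin.val_castSucc, Fin.val_succ] at h₁ h₂
    omega

theorem nullMeasurableSet_injective_and_pathWeight_le {Ω : Type*} [MeasurableSpace Ω]
    {P : Measure Ω} {n k : ℕ} {W : Sym2 (Fin n) → Ω → ℝ} (hW : ∀ e, AEMeasurable (W e) P)
    (p : Fin (k + 1) → Fin n) (t : ℝ) :
    NullMeasurableSet {ω | Function.Injective p ∧ pathWeight (fun e => W e ω) p ≤ t} P := by
  by_cases hp : Function.Injective p
  · simp only [hp, true_and, pathWeight]
    exact nullMeasurableSet_le (Finset.aemeasurable_fun_sum _ fun i _ => hW _) aemeasurable_const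
  · simp [hp]

theorem measureReal_injective_and_pathWeight_le {Ω : Type*} [MeasurableSpace Ω]
    {P : Measure Ω} {n k : ℕ} {W : Sym2 (Fin n) → Ω → ℝ} {r : ℝ} (hr : 0 < r)
    (hindep : iIndepFun W P) (hW : ∀ e, P.map (W e) = expMeasure r)
    (p : Fin (k + 1) → Fin n) {t : ℝ} (ht : 0 ≤ t) :
    P.real {ω | Function.Injective p ∧ pathWeight (fun e => W e ω) p ≤ t}
      ≤ (r * t) ^ k / k ! := by
  by_cases hp : Function.Injective p
  · simp only [hp, true_and]
    refine ENNReal.toReal_le_of_le_ofReal (by positivity) ?_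
    have := measure_sum_le_erlangCDFBound hr (hindep.precomp (pathEdges_injective hp))
      (fun i => hW _) t
    rwa [erlangCDFBound, indicator_of_mem (mem_Ici.2 ht)] at this
  · simp only [hp, false_and, ofPred_false, measureReal_empty]
    positivity

theorem pow_div_factorial_le_stirling {x : ℝ} (hx : 0 ≤ x) {k : ℕ} (hk : k ≠ 0) :
    (x * k) ^ k / k ! ≤ (x * exp 1) ^ k / √(2 * π * k) := by
  have hk' : (0 : ℝ) < k := by positivity
  calc (x * k) ^ k / k ! ≤ (x * k) ^ k / (√(2 * π * k) * (k / exp 1) ^ k) := by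
        gcongr
        exact Stirling.le_factorial_stirling k
    _ = (x * exp 1) ^ k / √(2 * π * k) := by
        rw [mul_pow, mul_pow, div_pow]
        field_simp

theorem one_div_exp_add_mul_exp_pow_le {η : ℝ} (hη : 0 ≤ η) (k : ℕ) :
    ((1 / exp 1 + η) * exp 1) ^ k ≤ exp (exp 1 * k * η) := by
  have hbase : (1 / exp 1 + η) * exp 1 = η * exp 1 + 1 := by field_simp; ring
  calc ((1 / exp 1 + η) * exp 1) ^ k ≤ exp (η * exp 1) ^ k := by
        rw [hbase]
        gcongr
        exact add_one_le_exp _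
    _ = exp (exp 1 * k * η) := by rw [← exp_nat_mul]; ring_nf

/-- **First moment bound on the number of `λ`-light paths of a given length.**
Let `λ = 1/e + η` with `η > 0`. For every `n ≥ 1` and integer `k ≥ 1`, the expected number of
`λ`-light paths of length `k` in the stochastic mean-field model on `n` vertices is at most
`(n/√(2πk))·e^{e·k·η}`. -/
theorem expected_number_of_light_paths_le
    (η : ℝ) (hη : 0 < η) (n k : ℕ) (hn : 1 ≤ n) (hk : 1 ≤ k)
    (Ω : Type*) (mΩ : MeasurableSpace Ω) (P : Measure Ω) [IsProbabilityMeasure P]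
    (W : Sym2 (Fin n) → Ω → ℝ)
    (hindep : iIndepFun W P)
    (hdist : ∀ e, Measure.map (W e) P = expMeasure (1 / n)) :
    ∫ ω, (Nat.card {p : Fin (k + 1) → Fin n // Function.Injective p ∧
          pathWeight (fun e => W e ω) p ≤ (1 / Real.exp 1 + η) * k} : ℝ) ∂P
      ≤ (n : ℝ) / Real.sqrt (2 * Real.pi * k)
          * Real.exp (Real.exp 1 * k * η) := by
  have hn' : (0 : ℝ) < n := by exact_mod_cast hn
  have hr : (0 : ℝ) < 1 / n := by positivity
  have hlam : 0 ≤ 1 / exp 1 + η := by positivity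
  have hW e : AEMeasurable (W e) P := aemeasurable_of_map_eq_expMeasure hr (hdist e)
  calc _ = ∑ p : Fin (k + 1) → Fin n,
        P.real {ω | Function.Injective p ∧ pathWeight (fun e => W e ω) p ≤ (1 / exp 1 + η) * k} :=
        integral_natCard_eq_sum_measureReal fun p =>
          nullMeasurableSet_injective_and_pathWeight_le hW p _
    _ ≤ ∑ _p : Fin (k + 1) → Fin n, (1 / n * ((1 / exp 1 + η) * k)) ^ k / k ! :=
        Finset.sum_le_sum fun p _ =>
          measureReal_injective_and_pathWeight_le hr hindep hdist p (by positivity)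
    _ = n * (((1 / exp 1 + η) * k) ^ k / k !) := by
        rw [Finset.sum_const, Finset.card_univ, Fintype.card_fun, Fintype.card_fin,
          Fintype.card_fin, nsmul_eq_mul, one_div_mul_eq_div, div_pow]
        push_cast
        field_simp
        ring
    _ ≤ n * (((1 / exp 1 + η) * exp 1) ^ k / √(2 * π * k)) :=
        mul_le_mul_of_nonneg_left (pow_div_factorial_le_stirling hlam (by omega)) hn'.le
    _ = n / √(2 * π * k) * ((1 / exp 1 + η) * exp 1) ^ k := by ring
    _ ≤ n / √(2 * π * k) * exp (exp 1 * k * η) := by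
        gcongr
        exact one_div_exp_add_mul_exp_pow_le hη.le k
end
end

section
/- Let π₁, π₂, π₃, π₄ be self-avoiding paths of length ℓ in a complete graph, identified with their vertex and edge sets. Suppose |E(π₃ ∪ π₄)| = 2ℓ − j and |E(π₁ ∪ π₂) ∩ E(π₃ ∪ π₄)| = j′ where 0 ≤ j ≤ ℓ and 1 ≤ j′ ≤ 2ℓ − j, and suppose the graph π₃ ∩ π₄ (with edge set E(π₃) ∩ E(π₄)) is nonempty. Then |V(π₃) ∩ V(π₄)| + |V(π₃ ∪ π₄) ∩ V(π₁ ∪ π₂)| ≥ j + j′ + 2. -/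
/-!
Put `T := V(π₃ ∪ π₄) ∩ V(π₁ ∪ π₂)`. A shared edge has both ends in `T`, so it suffices to bound
`|V(π₃ ∪ π₄) \ T|` by the number of edges of `π₃ ∪ π₄` with an end outside `T`. On a path through
a vertex `k` of a set `S`, sending each vertex outside `S` to its edge pointing towards `k` injects
the vertices outside `S` into the edges leaving `S`. Apply this to a path meeting `T`, then to the
other path with `S` enlarged by the vertices of the first one (they share a vertex); the two sets of
edges are disjoint. Finally `|V(π₃) ∩ V(π₄)| + |V(π₃ ∪ π₄)| = 2(ℓ + 1)`.
-/

open Finset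

noncomputable section

/-- The vertex set of the path `p = (p 0, …, p m)`, as a finset. -/
def pathVerts {V : Type*} [DecidableEq V] {m : ℕ} (p : Fin (m + 1) → V) : Finset V :=
  Finset.image p Finset.univ

/-- The edge set of the path `p = (p 0, …, p m)` (the `m` consecutive pairs), as a finset. -/
def pathEdges {V : Type*} [DecidableEq V] {m : ℕ} (p : Fin (m + 1) → V) : Finset (Sym2 V) :=
  Finset.image (fun i : Fin m => s(p i.castSucc, p i.succ)) Finset.univ

open Function

namespace Fin

theorem card_filter_le_card_filter_castSucc_or_succ {m : ℕ} (P : Fin (m + 1) → Prop)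
    [DecidablePred P] {k : Fin (m + 1)} (hk : ¬ P k) :
    #{i | P i} ≤ #{i : Fin m | P i.castSucc ∨ P i.succ} := by
  -- `k.succAbove` sends the edge `(i, i + 1)` to its end on the far side from `k`
  calc #{i | P i}
      ≤ #(({i : Fin m | P i.castSucc ∨ P i.succ} : Finset _).image k.succAbove) := by
        refine card_le_card fun i hi => ?_
        have hPi : P i := (mem_filter.mp hi).2
        obtain ⟨j, rfl⟩ := exists_succAbove_eq (ne_of_apply_ne P fun h => hk (h ▸ hPi))
        refine mem_image_of_mem _ (mem_filter.mpr ⟨mem_univ _, ?_⟩)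
        rcases lt_or_ge j.castSucc k with h | h
        · exact .inl (succAbove_of_castSucc_lt k j h ▸ hPi)
        · exact .inr (succAbove_of_le_castSucc k j h ▸ hPi)
    _ ≤ _ := card_image_le

end Fin

section Paths

variable {V : Type*} {m : ℕ} {p q : Fin (m + 1) → V}

theorem injective_pathEdge (hp : Injective p) :
    Injective fun i : Fin m => s(p i.castSucc, p i.succ) := by
  intro a b h
  rcases Sym2.eq_iff.mp h with ⟨h₁, -⟩ | ⟨h₁, h₂⟩
  · exact Fin.castSucc_injective _ (hp h₁)
  · have h₁ := congrArg Fin.val (hp h₁)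
    have h₂ := congrArg Fin.val (hp h₂)
    simp only [Fin.val_castSucc, Fin.val_succ] at h₁ h₂
    omega

variable [DecidableEq V]

theorem card_pathVerts (hp : Injective p) : #(pathVerts p) = m + 1 := by
  rw [pathVerts, card_image_of_injective _ hp, card_univ, Fintype.card_fin]

theorem pathEdges_subset_sym2_pathVerts (p : Fin (m + 1) → V) :
    pathEdges p ⊆ (pathVerts p).sym2 := by
  simp only [subset_iff, pathEdges, pathVerts, mem_image, mem_univ, true_and, mem_sym2_iff]
  rintro _ ⟨i, rfl⟩ v hv
  rcases Sym2.mem_iff.mp hv with rfl | rfl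
  exacts [⟨_, rfl⟩, ⟨_, rfl⟩]

theorem pathEdges_union_subset_sym2 (p q : Fin (m + 1) → V) :
    pathEdges p ∪ pathEdges q ⊆ (pathVerts p ∪ pathVerts q).sym2 :=
  union_subset ((pathEdges_subset_sym2_pathVerts p).trans (sym2_mono subset_union_left))
    ((pathEdges_subset_sym2_pathVerts q).trans (sym2_mono subset_union_right))

theorem card_pathVerts_sdiff_le (hp : Injective p) {S : Finset V}
    (hS : (S ∩ pathVerts p).Nonempty) :
    #(pathVerts p \ S) ≤ #(pathEdges p \ S.sym2) := by
  obtain ⟨_, hkS, hk⟩ := hS.exists_mem.imp fun _ h => mem_inter.mp h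
  obtain ⟨k, -, rfl⟩ := mem_image.mp hk
  have hverts : pathVerts p \ S = ({i | p i ∉ S} : Finset _).image p := by
    ext v
    simp only [pathVerts, mem_sdiff, mem_image, mem_filter, mem_univ, true_and]
    constructor
    · rintro ⟨⟨i, rfl⟩, hi⟩
      exact ⟨i, hi, rfl⟩
    · rintro ⟨i, hi, rfl⟩
      exact ⟨⟨i, rfl⟩, hi⟩
  have hedges : pathEdges p \ S.sym2 =
      ({i : Fin m | p i.castSucc ∉ S ∨ p i.succ ∉ S} : Finset _).image
        fun i => s(p i.castSucc, p i.succ) := by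
    ext e
    simp only [pathEdges, mem_sdiff, mem_image, mem_filter, mem_univ, true_and, mem_sym2_iff]
    constructor
    · rintro ⟨⟨i, rfl⟩, hi⟩
      exact ⟨i, by rwa [Sym2.forall_mem_pair, not_and_or] at hi, rfl⟩
    · rintro ⟨i, hi, rfl⟩
      exact ⟨⟨i, rfl⟩, by rwa [Sym2.forall_mem_pair, not_and_or]⟩
  rw [hverts, hedges, card_image_of_injective _ hp,
    card_image_of_injective _ (injective_pathEdge hp)]
  exact Fin.card_filter_le_card_filter_castSucc_or_succ (fun i => p i ∉ S) (not_not.mpr hkS)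

theorem card_pathVerts_union_sdiff_le_of_left (hp : Injective p) (hq : Injective q)
    (hpq : (pathVerts p ∩ pathVerts q).Nonempty) {S : Finset V}
    (hS : (S ∩ pathVerts p).Nonempty) :
    #((pathVerts p ∪ pathVerts q) \ S) ≤ #((pathEdges p ∪ pathEdges q) \ S.sym2) := by
  have hS' : ((S ∪ pathVerts p) ∩ pathVerts q).Nonempty :=
    hpq.mono (inter_subset_inter_right subset_union_right)
  have hdisj : Disjoint (pathEdges p \ S.sym2) (pathEdges q \ (S ∪ pathVerts p).sym2) :=
    disjoint_sdiff.mono_left (sdiff_subset.trans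
      ((pathEdges_subset_sym2_pathVerts p).trans (sym2_mono subset_union_right)))
  calc #((pathVerts p ∪ pathVerts q) \ S)
      = #((pathVerts p \ S) ∪ (pathVerts q \ (S ∪ pathVerts p))) := by
        congr 1; ext; simp only [mem_union, mem_sdiff]; tauto
    _ ≤ #(pathVerts p \ S) + #(pathVerts q \ (S ∪ pathVerts p)) := card_union_le _ _
    _ ≤ #(pathEdges p \ S.sym2) + #(pathEdges q \ (S ∪ pathVerts p).sym2) :=
        add_le_add (card_pathVerts_sdiff_le hp hS) (card_pathVerts_sdiff_le hq hS')
    _ = #((pathEdges p \ S.sym2) ∪ (pathEdges q \ (S ∪ pathVerts p).sym2)) :=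
        (card_union_of_disjoint hdisj).symm
    _ ≤ #((pathEdges p ∪ pathEdges q) \ S.sym2) := by
        refine card_le_card (union_subset (sdiff_subset_sdiff subset_union_left le_rfl) ?_)
        exact sdiff_subset_sdiff subset_union_right (sym2_mono subset_union_left)

theorem card_pathVerts_union_sdiff_le (hp : Injective p) (hq : Injective q)
    (hpq : (pathVerts p ∩ pathVerts q).Nonempty) {S : Finset V}
    (hS : (S ∩ (pathVerts p ∪ pathVerts q)).Nonempty) :
    #((pathVerts p ∪ pathVerts q) \ S) ≤ #((pathEdges p ∪ pathEdges q) \ S.sym2) := by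
  rw [inter_union_distrib_left] at hS
  rcases union_nonempty.mp hS with hSp | hSq
  · exact card_pathVerts_union_sdiff_le_of_left hp hq hpq hSp
  · rw [union_comm (pathVerts p), union_comm (pathEdges p)]
    exact card_pathVerts_union_sdiff_le_of_left hq hp (inter_comm (pathVerts p) _ ▸ hpq) hSq

end Paths

theorem vertex_count_of_path_pairs_general
    {V : Type*} [DecidableEq V] {ℓ : ℕ}
    (π₁ π₂ π₃ π₄ : Fin (ℓ + 1) → V)
    (h₃ : Function.Injective π₃) (h₄ : Function.Injective π₄)
    (j j' : ℕ) (hj'₁ : 1 ≤ j')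
    (hE : (pathEdges π₃ ∪ pathEdges π₄).card = 2 * ℓ - j)
    (hE' : ((pathEdges π₁ ∪ pathEdges π₂) ∩ (pathEdges π₃ ∪ pathEdges π₄)).card = j')
    (hne : (pathVerts π₃ ∩ pathVerts π₄).Nonempty) :
    j + j' + 2 ≤ (pathVerts π₃ ∩ pathVerts π₄).card +
      ((pathVerts π₃ ∪ pathVerts π₄) ∩ (pathVerts π₁ ∪ pathVerts π₂)).card := by
  set F := (pathEdges π₁ ∪ pathEdges π₂) ∩ (pathEdges π₃ ∪ pathEdges π₄)
  set T := (pathVerts π₃ ∪ pathVerts π₄) ∩ (pathVerts π₁ ∪ pathVerts π₂)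
  have hFT : F ⊆ T.sym2 := fun e he => by
    have h₁₂ := pathEdges_union_subset_sym2 π₁ π₂ (mem_inter.mp he).1
    have h₃₄ := pathEdges_union_subset_sym2 π₃ π₄ (mem_inter.mp he).2
    rw [mem_sym2_iff] at h₁₂ h₃₄ ⊢
    exact fun v hv => mem_inter.mpr ⟨h₃₄ v hv, h₁₂ v hv⟩
  have hT : T.Nonempty :=
    sym2_nonempty.mp ((card_pos.mp (hE' ▸ hj'₁ : 0 < #F)).mono hFT)
  have hcount := calc
    #((pathVerts π₃ ∪ pathVerts π₄) \ T)
        ≤ #((pathEdges π₃ ∪ pathEdges π₄) \ T.sym2) :=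
          card_pathVerts_union_sdiff_le h₃ h₄ hne (by rwa [inter_eq_left.mpr inter_subset_left])
    _ ≤ #((pathEdges π₃ ∪ pathEdges π₄) \ F) := card_le_card (sdiff_subset_sdiff le_rfl hFT)
  rw [card_sdiff_of_subset (s := T) inter_subset_left,
    card_sdiff_of_subset (s := F) inter_subset_right] at hcount
  have hFE : #F ≤ #(pathEdges π₃ ∪ pathEdges π₄) := card_le_card inter_subset_right
  have hTV : #T ≤ #(pathVerts π₃ ∪ pathVerts π₄) := card_le_card inter_subset_left
  have hV := card_inter_add_card_union (pathVerts π₃) (pathVerts π₄)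
  rw [card_pathVerts h₃, card_pathVerts h₄] at hV
  omega

/-- **Vertex-counting lemma for two pairs of paths.**
Let `π₁, π₂, π₃, π₄` be self-avoiding paths of length `ℓ` in a complete graph. If
`|E(π₃ ∪ π₄)| = 2ℓ − j`, `|E(π₁ ∪ π₂) ∩ E(π₃ ∪ π₄)| = j′` with `0 ≤ j ≤ ℓ`,
`1 ≤ j′ ≤ 2ℓ − j`, and the (vertex-wise and edge-wise) intersection `π₃ ∩ π₄` is nonempty,
then `|V(π₃) ∩ V(π₄)| + |V(π₃ ∪ π₄) ∩ V(π₁ ∪ π₂)| ≥ j + j′ + 2`. -/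
theorem vertex_count_of_path_pairs
    {V : Type*} [Fintype V] [DecidableEq V] {ℓ : ℕ}
    (π₁ π₂ π₃ π₄ : Fin (ℓ + 1) → V)
    (h₁ : Function.Injective π₁) (h₂ : Function.Injective π₂)
    (h₃ : Function.Injective π₃) (h₄ : Function.Injective π₄)
    (j j' : ℕ) (hj : j ≤ ℓ) (hj'₁ : 1 ≤ j') (hj'₂ : j' ≤ 2 * ℓ - j)
    (hE : (pathEdges π₃ ∪ pathEdges π₄).card = 2 * ℓ - j)
    (hE' : ((pathEdges π₁ ∪ pathEdges π₂) ∩ (pathEdges π₃ ∪ pathEdges π₄)).card = j')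
    (hne : (pathVerts π₃ ∩ pathVerts π₄).Nonempty) :
    j + j' + 2 ≤ (pathVerts π₃ ∩ pathVerts π₄).card +
      ((pathVerts π₃ ∪ pathVerts π₄) ∩ (pathVerts π₁ ∪ pathVerts π₂)).card :=
  vertex_count_of_path_pairs_general π₁ π₂ π₃ π₄ h₃ h₄ j j' hj'₁ hE hE' hne
end
end
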